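/- arXiv:1403.4120 — 6 statements merged into one kernel-verified Lean document; each statement's English description precedes it below -/
import Mathlib

section
/- Let (A, *, α) be a multiplicative Hom-algebra and define the ternary operation (x,y,z) := as^J(y,z,x), where as^J is the Hom-Jordan associator. Then (A, (,,), α) is a multiplicative Hom-triple system, i.e., (x,y,z) = -(y,x,z), the cyclic sum over x,y,z of (x,y,z) vanishes, and α((x,y,z)) = (α(x), α(y), α(z)). -/
def Jac {A : Type*} [AddCommGroup A] (m : A → A → A) (f : A → A) (x y z : A) : A :=
  m (m x y) (f z) + m (m y z) (f x) + m (m z x) (f y)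

def hAssoc {A : Type*} [AddCommGroup A] (m : A → A → A) (f : A → A) (x y z : A) : A :=
  m (m x y) (f z) - m (f x) (m y z)

def jord {A : Type*} [AddCommGroup A] (m : A → A → A) (x y : A) : A := m x y + m y x

def jAssoc {A : Type*} [AddCommGroup A] (m : A → A → A) (f : A → A) (x y z : A) : A :=
  jord m (jord m x y) (f z) - jord m (f x) (jord m y z)

theorem stmt2 {K A : Type*} [Field K] [CharZero K] [AddCommGroup A] [Module K A]
    (mul : A →ₗ[K] A →ₗ[K] A) (α : A →ₗ[K] A)
    (mult : ∀ x y : A, α (mul x y) = mul (α x) (α y))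
    (T : A → A → A → A)
    (hT : ∀ x y z : A, T x y z = jAssoc (fun a b => mul a b) α y z x) :
    (∀ x y z : A, T x y z = - T y x z)
    ∧ (∀ x y z : A, T x y z + T y z x + T z x y = 0)
    ∧ (∀ x y z : A, α (T x y z) = T (α x) (α y) (α z)) := by
  refine ⟨?_, ?_, ?_⟩ <;> intro x y z <;>
    simp only [hT, jAssoc, jord, map_add, map_sub, mult, LinearMap.add_apply] <;> abel
end

section
/- Let (A, *, α) be a multiplicative Hom-Malcev algebra and define {x,y,z}_α := 2(x*y)*α(z) - (y*z)*α(x) - (z*x)*α(y). Then {α(x), α(y), u*v}_α = α²(u)*{x,y,v}_α + {x,y,u}_α*α²(v) - J_α(α(u), α(v), x*y) for all u,v,x,y in A. -/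
set_option maxHeartbeats 4000000 in
theorem stmt4 {K A : Type*} [Field K] [CharZero K] [AddCommGroup A] [Module K A]
    (mul : A →ₗ[K] A →ₗ[K] A) (α : A →ₗ[K] A)
    (anticomm : ∀ x y : A, mul x y = - mul y x)
    (mult : ∀ x y : A, α (mul x y) = mul (α x) (α y))
    (malcev : ∀ x y z : A, Jac (fun a b => mul a b) α (α x) (α y) (mul x z)
        = mul (Jac (fun a b => mul a b) α x y z) (α (α x)))
    (T : A → A → A → A)
    (hT : ∀ x y z : A, T x y z
        = 2 • mul (mul x y) (α z) - mul (mul y z) (α x) - mul (mul z x) (α y))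
 :
    ∀ u v x y : A, T (α x) (α y) (mul u v)
        = mul (α (α u)) (T x y v) + mul (T x y u) (α (α v))
          - Jac (fun a b => mul a b) α (α u) (α v) (mul x y) := by
  intro u v x y
  have m0 := malcev (u + v) x y
  have m0a := malcev u x y
  have m0b := malcev v x y
  have m1 := malcev (u + x) v y
  have m1a := malcev u v y
  have m1b := malcev x v y
  have m2 := malcev (u + x) y v
  have m2a := malcev u y v
  have m2b := malcev x y v
  have m3 := malcev (u + y) v x
  have m3a := malcev u v x
  have m3b := malcev y v x
  simp only [Jac, hT, mult, map_add, LinearMap.add_apply, map_sub, LinearMap.sub_apply, map_neg, LinearMap.neg_apply, map_nsmul, LinearMap.smul_apply, smul_neg, neg_neg, anticomm (mul (α u) (mul u v)) (α (α y)), anticomm (mul (α u) (mul u x)) (α (α v)), anticomm (mul (α u) (mul u y)) (α (α v)), anticomm (mul (α u) (mul u y)) (α (α x)), anticomm (mul (α u) (mul v x)) (α (α u)), anticomm (mul (α u) (mul v x)) (α (α y)), anticomm (mul (α u) (mul v y)) (α (α u)), anticomm (mul (α u) (mul v y)) (α (α x)), anticomm (mul (α u) (mul x y)) (α (α u)), anticomm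 (mul (α u) (mul x y)) (α (α v)), anticomm (mul (α u) (α y)) (mul (α u) (α v)), anticomm (mul (α v) (mul u x)) (α (α u)), anticomm (mul (α v) (mul u x)) (α (α y)), anticomm (mul (α v) (mul u y)) (α (α u)), anticomm (mul (α v) (mul u y)) (α (α x)), anticomm (mul (α v) (mul v y)) (α (α x)), anticomm (mul (α v) (mul x y)) (α (α u)), anticomm (mul (α v) (mul x y)) (α (α v)), anticomm (mul (α v) (mul x y)) (α (α x)), anticomm (mul (α v) (mul x y)) (α (α y)), anticomm (mul (α v) (α x)) (mul (α u) (α y)), anticomm (mul (α v) (α y)) (mul (α u) (α x)), anticomm (mul (α x) (mul u v)) (α (α u)), anticomm (mul (α x) (mul u v)) (α (α y)), anticomm (mul (α x) (mul u y)) (α (α u)), anticomm (mul (α x) (mul u y)) (α (α v)), anticomm (mul (α x) (mul v x)) (α (α y)), anticomm (mul (α x) (mul v y)) (α (α u)), anticomm (mul (α x) (mul v y)) (α (α v)), anticomm (mul (α x) (mul v y)) (α (α x)), anticomm (mul (α x) (mul v y)) (α (α y)), anticomm (mul (α x) (mul x y)) (α (α v)), anticomm (mul (α x) (α y)) (mul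 (α u) (α v)), anticomm (mul (α x) (α y)) (mul (α v) (α x)), anticomm (mul (α y) (mul u v)) (α (α u)), anticomm (mul (α y) (mul u v)) (α (α x)), anticomm (mul (α y) (mul u x)) (α (α u)), anticomm (mul (α y) (mul u x)) (α (α v)), anticomm (mul (α y) (mul v x)) (α (α u)), anticomm (mul (α y) (mul v x)) (α (α v)), anticomm (mul (α y) (mul v x)) (α (α x)), anticomm (mul (α y) (mul v x)) (α (α y)), anticomm (mul (α y) (mul x y)) (α (α v)), anticomm (mul u v) (α u), anticomm (mul u v) (α x), anticomm (mul u v) (α y), anticomm (mul u x) (α u), anticomm (mul u x) (α v), anticomm (mul u x) (α y), anticomm (mul u y) (α u), anticomm (mul u y) (α v), anticomm (mul u y) (α x), anticomm (mul v x) (α u), anticomm (mul v x) (α x), anticomm (mul v x) (α y), anticomm (mul v y) (α u), anticomm (mul v y) (α v), anticomm (mul v y) (α x), anticomm (mul x y) (α u), anticomm (mul x y) (α v), anticomm (mul x y) (α x), anticomm (mul x y) (α y), anticomm (α x) (α v), anticomm (α y) (α v), anticomm (α y) (α x), anticomm v u, anticomm x u, anticomm x v, anticomm y u, anticomm y v,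 anticomm y x] at m0 m0a m0b m1 m1a m1b m2 m2a m2b m3 m3a m3b ⊢
  linear_combination (norm := module) ((-1/2 : K)) • (m0 - m0a - m0b) + ((-1 : K)) • (m1 - m1a - m1b) + ((-1/2 : K)) • (m2 - m2a - m2b) + ((1/2 : K)) • (m3 - m3a - m3b)
end

section
/- Let (A, *) be a Malcev algebra and α a self-morphism of (A, *). Define x ~* y := α(x*y). Then (A, ~*, α) is a multiplicative Hom-Malcev algebra, and the ternary product {x,y,z}_α := 2(x~*y)~*α(z) - (y~*z)~*α(x) - (z~*x)~*α(y) equals α²(2(x*y)*z - (y*z)*x - (z*x)*y). -/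
theorem stmt7 {K A : Type*} [Field K] [CharZero K] [AddCommGroup A] [Module K A]
    (mul : A →ₗ[K] A →ₗ[K] A) (α : A →ₗ[K] A)
    (anticomm : ∀ x y : A, mul x y = - mul y x)
    (malcev : ∀ x y z : A, Jac (fun a b => mul a b) id x y (mul x z) = mul (Jac (fun a b => mul a b) id x y z) x)
    (morph : ∀ x y : A, α (mul x y) = mul (α x) (α y))
    (m' : A → A → A) (hm' : ∀ x y : A, m' x y = α (mul x y)) :
    (∀ x y : A, m' x y = - m' y x)
    ∧ (∀ x y : A, α (m' x y) = m' (α x) (α y))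
    ∧ (∀ x y z : A, Jac m' α (α x) (α y) (m' x z) = m' (Jac m' α x y z) (α (α x)))
    ∧ (∀ x y z : A, 2 • m' (m' x y) (α z) - m' (m' y z) (α x) - m' (m' z x) (α y)
        = α (α (2 • mul (mul x y) z - mul (mul y z) x - mul (mul z x) y))) := by
  have J' : ∀ x y z : A, Jac m' α x y z
      = α (α (Jac (fun a b => mul a b) id x y z)) := by
    intro x y z
    simp only [Jac, hm', ← morph, ← map_add, id]
  have Jm : ∀ x y z : A, Jac (fun a b => mul a b) id (α x) (α y) (α z)
      = α (Jac (fun a b => mul a b) id x y z) := by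
    intro x y z
    simp only [Jac, ← morph, ← map_add, id]
  refine ⟨?_, ?_, ?_, ?_⟩
  · intro x y
    rw [hm', hm', anticomm, map_neg]
  · intro x y
    rw [hm', morph, hm']
  · intro x y z
    rw [J', hm' x z, Jm, malcev, hm', J', ← morph, ← morph]
  · intro x y z
    simp only [hm', ← morph, map_sub, map_nsmul]
end

section
/- In any multiplicative right Hom-alternative algebra (A, *, α), the identity as([u,v], α(x), α(y)) = [as(u,x,y), α²(v)] + [α²(u), as(v,x,y)] + as(α(v), α(u), [x,y]) - as(α(u), α(v), [x,y]) holds for all u,v,x,y, where [a,b] := a*b - b*a. -/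
private def H {K A : Type*} [Field K] [AddCommGroup A] [Module K A]
    (mul : A →ₗ[K] A →ₗ[K] A) (α : A →ₗ[K] A) (x y z : A) : A :=
  mul (mul x y) (α z) - mul (α x) (mul y z)

private lemma H_eq {K A : Type*} [Field K] [AddCommGroup A] [Module K A]
    (mul : A →ₗ[K] A →ₗ[K] A) (α : A →ₗ[K] A) (x y z : A) :
    hAssoc (fun a b => mul a b) α x y z = H mul α x y z := rfl

private lemma lin_aux {K A : Type*} [Field K] [AddCommGroup A] [Module K A]
    (mul : A →ₗ[K] A →ₗ[K] A) (α : A →ₗ[K] A)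
    (altR : ∀ x y : A, hAssoc (fun a b => mul a b) α x y y = 0) :
    ∀ p q r : A, H mul α p q r + H mul α p r q = 0 := by
  intro p q r
  have h := altR p (q + r)
  have hq := altR p q
  have hr := altR p r
  rw [H_eq] at h hq hr
  have key : H mul α p q r + H mul α p r q
      = H mul α p (q + r) (q + r) - H mul α p q q - H mul α p r r := by
    simp only [H, map_add, LinearMap.add_apply]
    abel
  rw [h, hq, hr] at key
  simpa using key

private lemma yau_aux {K A : Type*} [Field K] [CharZero K] [AddCommGroup A] [Module K A]
    (mul : A →ₗ[K] A →ₗ[K] A) (α : A →ₗ[K] A)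
    (mult : ∀ x y : A, α (mul x y) = mul (α x) (α y))
    (altR : ∀ x y : A, hAssoc (fun a b => mul a b) α x y y = 0) :
    ∀ u v x y : A,
      H mul α (mul u v) (α x) (α y)
        = mul (H mul α u x y) (α (α v)) + mul (α (α u)) (H mul α v x y)
          - H mul α (α u) (α v) (mul x y) + H mul α (α u) (α v) (mul y x) := by
  intro u v x y
  have lin := lin_aux mul α altR
  have h1 := lin (mul u v) (α x) (α y)
  have h2 := lin (α u) (mul v x) (α y)
  have h3 := lin (α u) (α v) (mul x y)
  have h4 := lin (α u) (mul v y) (α x)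
  have h5 := lin (α u) (α v) (mul y x)
  have h6 := lin (mul u x) (α v) (α y)
  have h7 := lin (α u) (mul x v) (α y)
  have h8 := lin (α u) (α x) (mul y v)
  have h9 := lin (mul u y) (α v) (α x)
  have h10 : mul (α (α u)) (H mul α v x y + H mul α v y x) = 0 := by
    rw [lin]; simp
  have h11 : mul (α (α u)) (H mul α x v y + H mul α x y v) = 0 := by
    rw [lin]; simp
  have h12 : mul (α (α u)) (H mul α y v x + H mul α y x v) = 0 := by
    rw [lin]; simp
  have h13 : mul (H mul α u x y + H mul α u y x) (α (α v)) = 0 := by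
    rw [lin]; simp
  have h14 : mul (H mul α u v y + H mul α u y v) (α (α x)) = 0 := by
    rw [lin]; simp
  have h15 : mul (H mul α u v x + H mul α u x v) (α (α y)) = 0 := by
    rw [lin]; simp
  have key :
      (H mul α (mul u v) (α x) (α y)
        - (mul (H mul α u x y) (α (α v)) + mul (α (α u)) (H mul α v x y)
          - H mul α (α u) (α v) (mul x y) + H mul α (α u) (α v) (mul y x)))
      + (H mul α (mul u v) (α x) (α y)
        - (mul (H mul α u x y) (α (α v)) + mul (α (α u)) (H mul α v x y)
          - H mul α (α u) (α v) (mul x y) + H mul α (α u) (α v) (mul y x)))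
      = (H mul α (mul u v) (α x) (α y) + H mul α (mul u v) (α y) (α x))
        + (H mul α (α u) (mul v x) (α y) + H mul α (α u) (α y) (mul v x))
        + (H mul α (α u) (α v) (mul x y) + H mul α (α u) (mul x y) (α v))
        - (H mul α (α u) (mul v y) (α x) + H mul α (α u) (α x) (mul v y))
        - (H mul α (α u) (α v) (mul y x) + H mul α (α u) (mul y x) (α v))
        - (H mul α (mul u x) (α v) (α y) + H mul α (mul u x) (α y) (α v))
        + (H mul α (α u) (mul x v) (α y) + H mul α (α u) (α y) (mul x v))
        - (H mul α (α u) (α x) (mul y v) + H mul α (α u) (mul y v) (α x))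
        + (H mul α (mul u y) (α v) (α x) + H mul α (mul u y) (α x) (α v))
        - mul (α (α u)) (H mul α v x y + H mul α v y x)
        + mul (α (α u)) (H mul α x v y + H mul α x y v)
        - mul (α (α u)) (H mul α y v x + H mul α y x v)
        - mul (H mul α u x y + H mul α u y x) (α (α v))
        - mul (H mul α u v y + H mul α u y v) (α (α x))
        + mul (H mul α u v x + H mul α u x v) (α (α y)) := by
    simp only [H, mult, map_add, map_sub, LinearMap.add_apply, LinearMap.sub_apply]
    abel
  rw [h1, h2, h3, h4, h5, h6, h7, h8, h9, h10, h11, h12, h13, h14, h15] at key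
  simp only [add_zero, zero_add, sub_zero, zero_sub, neg_zero] at key
  have k2 : (2 : K) • (H mul α (mul u v) (α x) (α y)
        - (mul (H mul α u x y) (α (α v)) + mul (α (α u)) (H mul α v x y)
          - H mul α (α u) (α v) (mul x y) + H mul α (α u) (α v) (mul y x))) = 0 := by
    rw [two_smul]; exact key
  have k3 := (smul_eq_zero.mp k2).resolve_left (by norm_num : (2 : K) ≠ 0)
  exact sub_eq_zero.mp k3

theorem stmt11 {K A : Type*} [Field K] [CharZero K] [AddCommGroup A] [Module K A]
    (mul : A →ₗ[K] A →ₗ[K] A) (α : A →ₗ[K] A)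
    (mult : ∀ x y : A, α (mul x y) = mul (α x) (α y))
    (altR : ∀ x y : A, hAssoc (fun a b => mul a b) α x y y = 0)
    (b : A → A → A) (hb : ∀ x y : A, b x y = mul x y - mul y x) :
    ∀ u v x y : A, hAssoc (fun a b => mul a b) α (b u v) (α x) (α y)
        = b (hAssoc (fun a b => mul a b) α u x y) (α (α v)) + b (α (α u)) (hAssoc (fun a b => mul a b) α v x y)
          + hAssoc (fun a b => mul a b) α (α v) (α u) (b x y) - hAssoc (fun a b => mul a b) α (α u) (α v) (b x y) := by
  intro u v x y
  have Y1 := yau_aux mul α mult altR u v x y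
  have Y2 := yau_aux mul α mult altR v u x y
  have key : hAssoc (fun a b => mul a b) α (b u v) (α x) (α y)
        - (b (hAssoc (fun a b => mul a b) α u x y) (α (α v)) + b (α (α u)) (hAssoc (fun a b => mul a b) α v x y)
          + hAssoc (fun a b => mul a b) α (α v) (α u) (b x y) - hAssoc (fun a b => mul a b) α (α u) (α v) (b x y))
      = (H mul α (mul u v) (α x) (α y)
          - (mul (H mul α u x y) (α (α v)) + mul (α (α u)) (H mul α v x y)
            - H mul α (α u) (α v) (mul x y) + H mul α (α u) (α v) (mul y x)))
        - (H mul α (mul v u) (α x) (α y)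
          - (mul (H mul α v x y) (α (α u)) + mul (α (α v)) (H mul α u x y)
            - H mul α (α v) (α u) (mul x y) + H mul α (α v) (α u) (mul y x))) := by
    simp only [hAssoc, hb, H, mult, map_add, map_sub, LinearMap.add_apply, LinearMap.sub_apply]
    abel
  have z : (H mul α (mul u v) (α x) (α y)
          - (mul (H mul α u x y) (α (α v)) + mul (α (α u)) (H mul α v x y)
            - H mul α (α u) (α v) (mul x y) + H mul α (α u) (α v) (mul y x)))
        - (H mul α (mul v u) (α x) (α y)
          - (mul (H mul α v x y) (α (α u)) + mul (α (α v)) (H mul α u x y)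
            - H mul α (α v) (α u) (mul x y) + H mul α (α v) (α u) (mul y x))) = 0 := by
    rw [Y1, Y2]; abel
  exact sub_eq_zero.mp (key.trans z)
end

section
/- If (A, *, α) is a multiplicative right Hom-alternative algebra, then the ternary operation (x,y,z) := as^J(y,z,x) (the Hom-Jordan associator cyclically permuted) satisfies (x,y,z) = [[x,y], α(z)] - 2·as(z,x,y), where [a,b] := a*b - b*a. -/
theorem stmt12 {K A : Type*} [Field K] [CharZero K] [AddCommGroup A] [Module K A]
    (mul : A →ₗ[K] A →ₗ[K] A) (α : A →ₗ[K] A)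
    (mult : ∀ x y : A, α (mul x y) = mul (α x) (α y))
    (altR : ∀ x y : A, hAssoc (fun a b => mul a b) α x y y = 0)
    (b : A → A → A) (hb : ∀ x y : A, b x y = mul x y - mul y x) :
    ∀ x y z : A, jAssoc (fun a b => mul a b) α y z x = b (b x y) (α z) - 2 • hAssoc (fun a b => mul a b) α z x y := by
  have lin : ∀ a c d : A, mul (mul a c) (α d) + mul (mul a d) (α c)
      = mul (α a) (mul c d) + mul (α a) (mul d c) := by
    intro a c d
    have h1 := altR a (c + d)
    have h2 := altR a c
    have h3 := altR a d
    simp only [hAssoc, map_add, LinearMap.add_apply] at h1 h2 h3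
    linear_combination (norm := module) h1 - h2 - h3
  intro x y z
  simp only [jAssoc, jord, hAssoc, hb, map_add, map_sub, LinearMap.add_apply, LinearMap.sub_apply]
  have h1 := lin x y z
  have h2 := lin y z x
  have h3 := lin z x y
  linear_combination (norm := module) - h1 + h2 + h3
end

section
/- If (A, *, α) is a multiplicative left Hom-alternative algebra, then the ternary operation (x,y,z) := as^J(y,z,x) satisfies (x,y,z) = [[x,y], α(z)] - 2·as(x,y,z), where [a,b] := a*b - b*a. -/
theorem stmt13 {K A : Type*} [Field K] [CharZero K] [AddCommGroup A] [Module K A]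
    (mul : A →ₗ[K] A →ₗ[K] A) (α : A →ₗ[K] A)
    (mult : ∀ x y : A, α (mul x y) = mul (α x) (α y))
    (altL : ∀ x y : A, hAssoc (fun a b => mul a b) α x x y = 0)
    (b : A → A → A) (hb : ∀ x y : A, b x y = mul x y - mul y x) :
    ∀ x y z : A, jAssoc (fun a b => mul a b) α y z x = b (b x y) (α z) - 2 • hAssoc (fun a b => mul a b) α x y z := by
  have S : ∀ x y z : A, mul (mul x y) (α z) - mul (α x) (mul y z)
      + (mul (mul y x) (α z) - mul (α y) (mul x z)) = 0 := by
    intro x y z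
    have h := altL (x + y) z
    have hx := altL x z
    have hy := altL y z
    simp only [hAssoc, map_add, LinearMap.add_apply] at h hx hy
    have e : mul (mul x y) (α z) - mul (α x) (mul y z)
        + (mul (mul y x) (α z) - mul (α y) (mul x z))
        = (mul (mul x x) (α z) + mul (mul y x) (α z) + (mul (mul x y) (α z) + mul (mul y y) (α z))
            - (mul (α x) (mul x z) + mul (α y) (mul x z) + (mul (α x) (mul y z) + mul (α y) (mul y z))))
          - (mul (mul x x) (α z) - mul (α x) (mul x z))
          - (mul (mul y y) (α z) - mul (α y) (mul y z)) := by abel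
    rw [e, h, hx, hy]
    abel
  intro x y z
  have h1 := S y z x
  have h2 := S x y z
  have h3 := S z x y
  rw [← sub_eq_zero]
  simp only [jAssoc, jord, hAssoc, hb, map_add, map_sub, LinearMap.add_apply,
    LinearMap.sub_apply, two_smul, smul_sub]
  have e : mul (mul y z) (α x) + mul (mul z y) (α x) + (mul (α x) (mul y z) + mul (α x) (mul z y))
        - (mul (α y) (mul z x) + mul (α y) (mul x z) + (mul (mul z x) (α y) + mul (mul x z) (α y)))
      - (mul (mul x y) (α z) - mul (mul y x) (α z) - (mul (α z) (mul x y) - mul (α z) (mul y x))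
        - (mul (mul x y) (α z) + mul (mul x y) (α z) - (mul (α x) (mul y z) + mul (α x) (mul y z))))
      = (mul (mul y z) (α x) - mul (α y) (mul z x) + (mul (mul z y) (α x) - mul (α z) (mul y x)))
      + (mul (mul x y) (α z) - mul (α x) (mul y z) + (mul (mul y x) (α z) - mul (α y) (mul x z)))
      - (mul (mul z x) (α y) - mul (α z) (mul x y) + (mul (mul x z) (α y) - mul (α x) (mul z y))) := by
    abel
  calc _ = _ := e.trans (by rw [h1, h2, h3]; abel)
end
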